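/- Let (Φ_k)_{k∈ℤ^d∖{0}} be complex numbers with Φ_{−k} = Φ_k^*, let (ω_k) be real numbers with ω_{−k} = −ω_k, and let (β_k) be nonnegative reals with β_{−k} = β_k. Assume Σ_{k≠0} |k|² |Φ_k| < ∞. For ε > 0 define E^ε(t,x) = Σ_{k≠0} (−i k) Φ_k e^{−i ω_k ε^{−β_k} t} e^{i k·x}. Then for every t > 0, ε > 0 and v ∈ ℝ^d, the matrix-valued integral 𝔻^ε(t,v) = ⨍_{𝕋^d} dx ∫_0^{t/ε²} dσ E^ε(t, x + σ v) ⊗ E^ε(t − ε²σ, x) equals Σ_{k≠0} (k ⊗ k) |Φ_k|² · sin((ε^{2−β_k} ω_k − k·v) t/ε²) / (ε^{2−β_k} ω_k − k·v), where the ratio sin(a T)/a is interpreted as T when a = 0, and the series converges absolutely. -/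

import Mathlib

open MeasureTheory Filter Topology

/-- The fundamental domain `[0,2π)^d` of the torus `𝕋^d = (ℝ/2πℤ)^d`. -/
def torusBox (d : ℕ) : Set (Fin d → ℝ) :=
  Set.pi Set.univ fun _ => Set.Ico (0 : ℝ) (2 * Real.pi)

/-!
Expanding both fields in Fourier modes, their product is an absolutely convergent double series
over pairs `(k, l)` of modes whose terms are a pure exponential in `σ` times the character
`e^{i(k+l)·x}`, so both integrals may be taken termwise. The torus average keeps only the pairs
`l = -k`; there, by the symmetries of `Φ`, `ω` and `β`, the amplitude is `k_i k_j |Φ_k|²` and the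
`σ`-frequency is `-a_k` with `a_k = ε^{2-β_k} ω_k - k·v`. Since `a_{-k} = -a_k`, pairing `k` with
`-k` replaces `∫_0^T e^{-i a_k σ} dσ` (with `T = t/ε²`) by
`∫_0^T cos (a_k σ) dσ = sin (a_k T) / a_k`.
-/

theorem tsum_ite_eq_tsum_graph {ι α : Type*} [AddCommMonoid α] [TopologicalSpace α]
    (e : ι → ι) (P : ι × ι → Prop) [DecidablePred P] (hP : ∀ p, P p ↔ p.2 = e p.1)
    (f : ι × ι → α) :
    ∑' p, (if P p then f p else 0) = ∑' k, f (k, e k) := by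
  rw [← Function.Injective.tsum_eq (g := fun k => (k, e k)) (fun _ _ h => congrArg Prod.fst h)]
  · simp [hP]
  · intro p hp
    have hPp : P p := by
      by_contra h
      simp [h] at hp
    exact ⟨p.1, Prod.ext rfl ((hP p).mp hPp).symm⟩

theorem tsum_eq_tsum_of_add_comp_equiv {ι 𝕜 : Type*} [DivisionRing 𝕜] [CharZero 𝕜]
    [TopologicalSpace 𝕜] [IsTopologicalRing 𝕜] [T2Space 𝕜]
    (e : ι ≃ ι) {g F : ι → 𝕜} (hg : Summable g) (h : ∀ k, g k + g (e k) = 2 * F k) :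
    ∑' k, g k = ∑' k, F k := by
  have key : 2 * ∑' k, g k = 2 * ∑' k, F k := calc
    2 * ∑' k, g k = ∑' k, g k + ∑' k, g (e k) := by rw [e.tsum_eq g, two_mul]
    _ = ∑' k, (g k + g (e k)) := (hg.tsum_add (e.summable_iff.mpr hg)).symm
    _ = ∑' k, 2 * F k := tsum_congr h
    _ = 2 * ∑' k, F k := tsum_mul_left
  exact mul_left_cancel₀ two_ne_zero key

theorem integral_tsum_of_norm_le {α ι E : Type*} [MeasurableSpace α] {μ : Measure α}
    [IsFiniteMeasure μ] [Countable ι] [NormedAddCommGroup E] [NormedSpace ℝ E]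
    {f : ι → α → E} {C : ι → ℝ} (hf : ∀ i, AEStronglyMeasurable (f i) μ) (hC : Summable C)
    (hle : ∀ i x, ‖f i x‖ ≤ C i) :
    ∫ x, ∑' i, f i x ∂μ = ∑' i, ∫ x, f i x ∂μ := by
  have hint : ∀ i, Integrable (f i) μ := fun i =>
    (integrable_const (C i)).mono' (hf i) (ae_of_all _ (hle i))
  refine (integral_tsum_of_summable_integral_norm hint ?_).symm
  refine Summable.of_nonneg_of_le (fun i => integral_nonneg fun _ => norm_nonneg _)
    (fun i => ?_) (hC.mul_right (μ.real Set.univ))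
  calc ∫ x, ‖f i x‖ ∂μ = ‖∫ x, ‖f i x‖ ∂μ‖ :=
        (Real.norm_of_nonneg (integral_nonneg fun _ => norm_nonneg _)).symm
    _ ≤ C i * μ.real Set.univ :=
        norm_integral_le_of_norm_le_const (ae_of_all _ fun x => by simpa using hle i x)

theorem norm_cexp_I_mul_mul (c σ : ℝ) : ‖Complex.exp (Complex.I * c * σ)‖ = 1 := by
  simp [Complex.norm_exp]

theorem norm_intervalIntegral_cexp_I_mul_le (c : ℝ) {T : ℝ} (hT : 0 ≤ T) :
    ‖∫ σ in (0 : ℝ)..T, Complex.exp (Complex.I * c * σ)‖ ≤ T := by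
  simpa [abs_of_nonneg hT] using intervalIntegral.norm_integral_le_of_norm_le_const
    (a := 0) (b := T) (C := 1) fun σ _ => (norm_cexp_I_mul_mul c σ).le

theorem intervalIntegral_cos_mul (a T : ℝ) :
    ∫ σ in (0 : ℝ)..T, Real.cos (a * σ) = if a = 0 then T else Real.sin (a * T) / a := by
  split_ifs with ha
  · simp [ha]
  · rw [intervalIntegral.integral_comp_mul_left Real.cos ha, integral_cos, mul_zero,
      Real.sin_zero, sub_zero, smul_eq_mul, inv_mul_eq_div]

theorem abs_intervalIntegral_cos_mul_le (a : ℝ) {T : ℝ} (hT : 0 ≤ T) :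
    |∫ σ in (0 : ℝ)..T, Real.cos (a * σ)| ≤ T := by
  simpa [abs_of_nonneg hT] using intervalIntegral.norm_integral_le_of_norm_le_const
    (a := 0) (b := T) (C := 1) (f := fun σ => Real.cos (a * σ))
    fun σ _ => Real.abs_cos_le_one (a * σ)

theorem intervalIntegral_cexp_neg_add_cexp (a T : ℝ) :
    (∫ σ in (0 : ℝ)..T, Complex.exp (Complex.I * ↑(-a) * σ))
        + ∫ σ in (0 : ℝ)..T, Complex.exp (Complex.I * a * σ)
      = 2 * ↑(∫ σ in (0 : ℝ)..T, Real.cos (a * σ)) := by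
  rw [← intervalIntegral.integral_add ((by fun_prop : Continuous _).intervalIntegrable _ _)
      ((by fun_prop : Continuous _).intervalIntegrable _ _),
    ← intervalIntegral.integral_ofReal, ← intervalIntegral.integral_const_mul]
  refine intervalIntegral.integral_congr fun σ _ => ?_
  simp only [Complex.ofReal_cos, Complex.ofReal_mul, Complex.two_cos, Complex.ofReal_neg]
  ring_nf

theorem integral_Ico_cexp_I_intCast_mul (n : ℤ) :
    ∫ y in Set.Ico 0 (2 * Real.pi), Complex.exp (Complex.I * n * y)
      = if n = 0 then ((2 * Real.pi : ℝ) : ℂ) else 0 := by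
  rw [integral_Ico_eq_integral_Ioo, ← integral_Ioc_eq_integral_Ioo,
    ← intervalIntegral.integral_of_le Real.two_pi_pos.le]
  split_ifs with hn
  · simp [hn]
  · have hIn : Complex.I * n ≠ 0 := mul_ne_zero Complex.I_ne_zero (by exact_mod_cast hn)
    rw [integral_exp_mul_complex hIn, div_eq_zero_iff, sub_eq_zero]
    left
    push_cast
    rw [mul_zero, Complex.exp_zero,
      show Complex.I * n * (2 * Real.pi) = n * (2 * Real.pi * Complex.I) by ring,
      Complex.exp_int_mul_two_pi_mul_I]

theorem volume_torusBox_lt_top (d : ℕ) : volume (torusBox d) < ⊤ := by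
  simpa [torusBox, volume_pi_pi, Real.volume_Ico] using
    Or.inl (ENNReal.mul_lt_top ENNReal.ofNat_lt_top ENNReal.ofReal_lt_top)

theorem Real.rpow_neg_mul_sq {ε : ℝ} (hε : 0 < ε) (b : ℝ) : ε ^ (-b) * ε ^ 2 = ε ^ (2 - b) := by
  rw [sub_eq_neg_add, Real.rpow_add hε, Real.rpow_two]

section

variable {d : ℕ}

def negNonzero : {k : Fin d → ℤ // k ≠ 0} ≃ {k : Fin d → ℤ // k ≠ 0} :=
  (Equiv.neg _).subtypeEquiv fun _ => neg_ne_zero.symm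

@[simp]
theorem coe_negNonzero (k : {k : Fin d → ℤ // k ≠ 0}) : (negNonzero k).1 = -k.1 := rfl

noncomputable def torusChar (k : Fin d → ℤ) (x : Fin d → ℝ) : ℂ :=
  Complex.exp (Complex.I * ∑ m, (k m : ℂ) * (x m : ℂ))

theorem norm_torusChar (k : Fin d → ℤ) (x : Fin d → ℝ) : ‖torusChar k x‖ = 1 := by
  simp [torusChar, Complex.norm_exp]

@[fun_prop]
theorem continuous_torusChar (k : Fin d → ℤ) : Continuous (torusChar k) := by
  unfold torusChar
  fun_prop

theorem torusChar_mul_torusChar (k l : Fin d → ℤ) (x : Fin d → ℝ) :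
    torusChar k x * torusChar l x = torusChar (k + l) x := by
  simp only [torusChar, ← Complex.exp_add, ← mul_add, ← Finset.sum_add_distrib, Pi.add_apply]
  push_cast
  simp only [add_mul]

theorem torusChar_add_smul (k : Fin d → ℤ) (x v : Fin d → ℝ) (σ : ℝ) :
    torusChar k (x + σ • v)
      = torusChar k x * Complex.exp (Complex.I * ↑(∑ m, (k m : ℝ) * v m) * σ) := by
  simp only [torusChar, ← Complex.exp_add, Pi.add_apply, Pi.smul_apply, smul_eq_mul]
  push_cast
  simp only [Finset.mul_sum, Finset.sum_mul, ← Finset.sum_add_distrib]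
  congr 1
  exact Finset.sum_congr rfl fun m _ => by ring

theorem integral_torusBox_torusChar (k : Fin d → ℤ) :
    ∫ x in torusBox d, torusChar k x = if k = 0 then (((2 * Real.pi) ^ d : ℝ) : ℂ) else 0 := by
  have hprod : ∀ x : Fin d → ℝ,
      torusChar k x = ∏ m, Complex.exp (Complex.I * (k m : ℤ) * (x m : ℝ)) := fun x => by
    rw [torusChar, ← Complex.exp_sum, Finset.mul_sum]
    simp only [mul_assoc]
  simp_rw [hprod]
  rw [torusBox, volume_pi, Measure.restrict_pi_pi,
    integral_fintype_prod_eq_prod fun m y => Complex.exp (Complex.I * (k m : ℤ) * (y : ℝ))]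
  simp_rw [integral_Ico_cexp_I_intCast_mul]
  split_ifs with hk
  · simp [hk]
  · obtain ⟨m, hm⟩ := Function.ne_iff.mp hk
    exact Finset.prod_eq_zero (Finset.mem_univ m) (if_neg hm)

theorem integral_torusBox_intervalIntegral_tsum {ι : Type*} [Countable ι] {c : ι → ℂ}
    (hc : Summable fun p => ‖c p‖) (freq : ι → ℝ) (n : ι → Fin d → ℤ) {T : ℝ} (hT : 0 ≤ T) :
    ∫ x in torusBox d, ∫ σ in (0 : ℝ)..T,
        ∑' p, c p * Complex.exp (Complex.I * freq p * σ) * torusChar (n p) x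
      = ∑' p, c p * (∫ σ in (0 : ℝ)..T, Complex.exp (Complex.I * freq p * σ))
          * if n p = 0 then (((2 * Real.pi) ^ d : ℝ) : ℂ) else 0 := by
  have hσ : ∀ x, ∫ σ in (0 : ℝ)..T,
        ∑' p, c p * Complex.exp (Complex.I * freq p * σ) * torusChar (n p) x
      = ∑' p, c p * (∫ σ in (0 : ℝ)..T, Complex.exp (Complex.I * freq p * σ))
          * torusChar (n p) x := fun x => by
    simp only [intervalIntegral.integral_of_le hT]
    rw [integral_tsum_of_norm_le (C := fun p => ‖c p‖)
      (fun p => (by fun_prop : Continuous _).aestronglyMeasurable) hc]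
    · simp only [integral_mul_const, integral_const_mul]
    · intro p σ
      simp [norm_torusChar, norm_cexp_I_mul_mul]
  simp_rw [hσ]
  have : IsFiniteMeasure (volume.restrict (torusBox d)) :=
    isFiniteMeasure_restrict.mpr (volume_torusBox_lt_top d).ne
  rw [integral_tsum_of_norm_le (C := fun p => ‖c p‖ * T)
    (fun p => (by fun_prop : Continuous _).aestronglyMeasurable) (hc.mul_right T)]
  · simp only [integral_const_mul, integral_torusBox_torusChar]
  · intro p x
    rw [norm_mul, norm_torusChar, mul_one, norm_mul]
    exact mul_le_mul_of_nonneg_left (norm_intervalIntegral_cexp_I_mul_le _ hT) (norm_nonneg _)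

theorem abs_intCast_le_sum_sq (k : Fin d → ℤ) (j : Fin d) :
    |(k j : ℝ)| ≤ ∑ m, (k m : ℝ) ^ 2 := by
  have hj : |(k j : ℝ)| ≤ (k j : ℝ) ^ 2 := by
    rw [← Int.cast_abs, Int.abs_eq_natAbs]
    exact_mod_cast Int.natAbs_le_self_sq (k j)
  exact hj.trans (Finset.single_le_sum (fun m _ => sq_nonneg (k m : ℝ)) (Finset.mem_univ j))

end

namespace OscillatingField

variable {d : ℕ} (Φ : (Fin d → ℤ) → ℂ) (ω β : (Fin d → ℤ) → ℝ) (ε : ℝ)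

noncomputable def coeff (s : ℝ) (j : Fin d) (k : Fin d → ℤ) : ℂ :=
  (-Complex.I * (k j : ℂ)) * Φ k
    * Complex.exp (-(Complex.I * (ω k : ℂ) * ((ε ^ (-(β k)) : ℝ) : ℂ) * (s : ℂ)))

noncomputable def field (s : ℝ) (x : Fin d → ℝ) (j : Fin d) : ℂ :=
  ∑' k : {k : Fin d → ℤ // k ≠ 0}, coeff Φ ω β ε s j k.1 * torusChar k.1 x

noncomputable def amp (i j : Fin d) (k : Fin d → ℤ) : ℝ := (k i : ℝ) * (k j : ℝ) * ‖Φ k‖ ^ 2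

/-- The `σ`-frequency of the pair of modes `(k, l)` in `E^ε(t, x + σ v) ⊗ E^ε(t - ε²σ, x)`. -/
noncomputable def pairFreq (v : Fin d → ℝ) (k l : Fin d → ℤ) : ℝ :=
  ∑ m, (k m : ℝ) * v m + ω l * ε ^ (-(β l)) * ε ^ 2

noncomputable def diagFreq (v : Fin d → ℝ) (k : Fin d → ℤ) : ℝ :=
  ε ^ ((2 : ℝ) - β k) * ω k - ∑ m, (k m : ℝ) * v m

theorem norm_coeff (s : ℝ) (j : Fin d) (k : Fin d → ℤ) :
    ‖coeff Φ ω β ε s j k‖ = |(k j : ℝ)| * ‖Φ k‖ := by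
  simp [coeff, Complex.norm_exp]

theorem coeff_sub_mul (s c σ : ℝ) (j : Fin d) (k : Fin d → ℤ) :
    coeff Φ ω β ε (s - c * σ) j k
      = coeff Φ ω β ε s j k * Complex.exp (Complex.I * ↑(ω k * ε ^ (-(β k)) * c) * σ) := by
  simp only [coeff, mul_assoc, ← Complex.exp_add]
  push_cast
  ring_nf

theorem coeff_mul_coeff_neg {k : Fin d → ℤ} (hΦ : Φ (-k) = (starRingEnd ℂ) (Φ k))
    (hω : ω (-k) = -ω k) (hβ : β (-k) = β k) (s : ℝ) (i j : Fin d) :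
    coeff Φ ω β ε s i k * coeff Φ ω β ε s j (-k) = amp Φ i j k := by
  have hexp : Complex.exp (-(Complex.I * (ω k : ℂ) * ((ε ^ (-(β k)) : ℝ) : ℂ) * s))
      * Complex.exp (-(Complex.I * ((-ω k : ℝ) : ℂ) * ((ε ^ (-(β k)) : ℝ) : ℂ) * s)) = 1 := by
    rw [← Complex.exp_add, ← Complex.exp_zero]
    push_cast
    ring_nf
  have hΦk : Φ k * (starRingEnd ℂ) (Φ k) = ((‖Φ k‖ ^ 2 : ℝ) : ℂ) := by
    rw [Complex.mul_conj, Complex.normSq_eq_norm_sq]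
  calc coeff Φ ω β ε s i k * coeff Φ ω β ε s j (-k)
      = -(Complex.I * Complex.I) * (k i * k j) * (Φ k * (starRingEnd ℂ) (Φ k))
          * (Complex.exp (-(Complex.I * (ω k : ℂ) * ((ε ^ (-(β k)) : ℝ) : ℂ) * s))
            * Complex.exp (-(Complex.I * ((-ω k : ℝ) : ℂ) * ((ε ^ (-(β k)) : ℝ) : ℂ) * s))) := by
        simp only [coeff, hΦ, hω, hβ, Pi.neg_apply, Int.cast_neg]
        ring
    _ = _ := by
        rw [hexp, hΦk, Complex.I_mul_I, amp]
        push_cast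
        ring

theorem pairFreq_neg {k : Fin d → ℤ} (hω : ω (-k) = -ω k) (hβ : β (-k) = β k) (hε : 0 < ε)
    (v : Fin d → ℝ) : pairFreq ω β ε v k (-k) = -diagFreq ω β ε v k := by
  rw [pairFreq, diagFreq, hω, hβ, mul_assoc, Real.rpow_neg_mul_sq hε]
  ring

theorem amp_neg {k : Fin d → ℤ} (hΦ : Φ (-k) = (starRingEnd ℂ) (Φ k)) (i j : Fin d) :
    amp Φ i j (-k) = amp Φ i j k := by
  simp only [amp, hΦ, Complex.norm_conj, Pi.neg_apply, Int.cast_neg, neg_mul_neg]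

theorem diagFreq_neg {k : Fin d → ℤ} (hω : ω (-k) = -ω k) (hβ : β (-k) = β k)
    (v : Fin d → ℝ) : diagFreq ω β ε v (-k) = -diagFreq ω β ε v k := by
  simp only [diagFreq, hω, hβ, Pi.neg_apply, Int.cast_neg, neg_mul, Finset.sum_neg_distrib]
  ring

variable {Φ}

theorem summable_abs_mul_norm
    (hsum : Summable fun k : {k : Fin d → ℤ // k ≠ 0} => (∑ m, (k.1 m : ℝ) ^ 2) * ‖Φ k.1‖)
    (j : Fin d) :
    Summable fun k : {k : Fin d → ℤ // k ≠ 0} => |(k.1 j : ℝ)| * ‖Φ k.1‖ :=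
  hsum.of_nonneg_of_le (fun _ => by positivity) fun k =>
    mul_le_mul_of_nonneg_right (abs_intCast_le_sum_sq k.1 j) (norm_nonneg _)

theorem summable_norm_coeff
    (hsum : Summable fun k : {k : Fin d → ℤ // k ≠ 0} => (∑ m, (k.1 m : ℝ) ^ 2) * ‖Φ k.1‖)
    (s : ℝ) (j : Fin d) :
    Summable fun k : {k : Fin d → ℤ // k ≠ 0} => ‖coeff Φ ω β ε s j k.1‖ := by
  simpa only [norm_coeff] using summable_abs_mul_norm hsum j

theorem summable_abs_amp
    (hsum : Summable fun k : {k : Fin d → ℤ // k ≠ 0} => (∑ m, (k.1 m : ℝ) ^ 2) * ‖Φ k.1‖)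
    (i j : Fin d) :
    Summable fun k : {k : Fin d → ℤ // k ≠ 0} => |amp Φ i j k.1| := by
  have hprod := (summable_abs_mul_norm hsum i).mul_of_nonneg (summable_abs_mul_norm hsum j)
    (fun _ => by positivity) (fun _ => by positivity)
  refine (hprod.comp_injective (i := fun k => (k, k)) fun _ _ h => congrArg Prod.fst h).congr
    fun k => ?_
  simp only [Function.comp_apply, amp, abs_mul, abs_pow, abs_norm]
  ring

theorem field_mul_field
    (hsum : Summable fun k : {k : Fin d → ℤ // k ≠ 0} => (∑ m, (k.1 m : ℝ) ^ 2) * ‖Φ k.1‖)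
    (t σ : ℝ) (x v : Fin d → ℝ) (i j : Fin d) :
    field Φ ω β ε t (x + σ • v) i * field Φ ω β ε (t - ε ^ 2 * σ) x j
      = ∑' p : {k : Fin d → ℤ // k ≠ 0} × {k : Fin d → ℤ // k ≠ 0},
          (coeff Φ ω β ε t i p.1.1 * coeff Φ ω β ε t j p.2.1)
            * Complex.exp (Complex.I * pairFreq ω β ε v p.1.1 p.2.1 * σ)
            * torusChar (p.1.1 + p.2.1) x := by
  have hnorm : ∀ s y j, Summable fun k : {k : Fin d → ℤ // k ≠ 0} =>
      ‖coeff Φ ω β ε s j k.1 * torusChar k.1 y‖ := fun s y j => by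
    simpa [norm_torusChar] using summable_norm_coeff ω β ε hsum s j
  rw [field, field, tsum_mul_tsum_of_summable_norm (hnorm _ _ _) (hnorm _ _ _)]
  refine tsum_congr fun p => ?_
  rw [torusChar_add_smul, coeff_sub_mul, ← torusChar_mul_torusChar, pairFreq]
  push_cast
  simp only [mul_add, add_mul, Complex.exp_add]
  ring

theorem integral_torusBox_field_mul_field
    (hΦ : ∀ k : Fin d → ℤ, k ≠ 0 → Φ (-k) = (starRingEnd ℂ) (Φ k))
    (hω : ∀ k : Fin d → ℤ, k ≠ 0 → ω (-k) = -ω k) (hβ : ∀ k : Fin d → ℤ, k ≠ 0 → β (-k) = β k)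
    (hsum : Summable fun k : {k : Fin d → ℤ // k ≠ 0} => (∑ m, (k.1 m : ℝ) ^ 2) * ‖Φ k.1‖)
    (hε : 0 < ε) (t : ℝ) (v : Fin d → ℝ) (i j : Fin d) {T : ℝ} (hT : 0 ≤ T) :
    ∫ x in torusBox d, ∫ σ in (0 : ℝ)..T,
        field Φ ω β ε t (x + σ • v) i * field Φ ω β ε (t - ε ^ 2 * σ) x j
      = (((2 * Real.pi) ^ d : ℝ) : ℂ) * ∑' k : {k : Fin d → ℤ // k ≠ 0}, (amp Φ i j k.1 : ℂ)
          * ∫ σ in (0 : ℝ)..T, Complex.exp (Complex.I * ↑(-diagFreq ω β ε v k.1) * σ) := by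
  simp_rw [field_mul_field ω β ε hsum]
  rw [integral_torusBox_intervalIntegral_tsum
    ((summable_norm_coeff ω β ε hsum t i).mul_norm (summable_norm_coeff ω β ε hsum t j)) _ _ hT]
  simp_rw [mul_ite, mul_zero]
  rw [tsum_ite_eq_tsum_graph negNonzero _ fun p => by
    rw [Subtype.ext_iff, coe_negNonzero, eq_neg_iff_add_eq_zero, add_comm], ← tsum_mul_left]
  refine tsum_congr fun k => ?_
  rw [coe_negNonzero, coeff_mul_coeff_neg Φ ω β ε (hΦ k k.2) (hω k k.2) (hβ k k.2),
    pairFreq_neg ω β ε (hω k k.2) (hβ k k.2) hε]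
  ring

theorem tsum_amp_mul_intervalIntegral_cexp
    (hΦ : ∀ k : Fin d → ℤ, k ≠ 0 → Φ (-k) = (starRingEnd ℂ) (Φ k))
    (hω : ∀ k : Fin d → ℤ, k ≠ 0 → ω (-k) = -ω k) (hβ : ∀ k : Fin d → ℤ, k ≠ 0 → β (-k) = β k)
    (hsum : Summable fun k : {k : Fin d → ℤ // k ≠ 0} => (∑ m, (k.1 m : ℝ) ^ 2) * ‖Φ k.1‖)
    (v : Fin d → ℝ) (i j : Fin d) {T : ℝ} (hT : 0 ≤ T) :
    ∑' k : {k : Fin d → ℤ // k ≠ 0}, (amp Φ i j k.1 : ℂ)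
        * ∫ σ in (0 : ℝ)..T, Complex.exp (Complex.I * ↑(-diagFreq ω β ε v k.1) * σ)
      = ∑' k : {k : Fin d → ℤ // k ≠ 0}, (amp Φ i j k.1 : ℂ)
        * ↑(∫ σ in (0 : ℝ)..T, Real.cos (diagFreq ω β ε v k.1 * σ)) := by
  refine tsum_eq_tsum_of_add_comp_equiv negNonzero ?_ fun k => ?_
  · refine ((summable_abs_amp hsum i j).mul_right T).of_norm_bounded fun k => ?_
    rw [norm_mul, Complex.norm_real, Real.norm_eq_abs]
    exact mul_le_mul_of_nonneg_left (norm_intervalIntegral_cexp_I_mul_le _ hT) (abs_nonneg _)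
  · rw [coe_negNonzero, amp_neg Φ (hΦ k k.2), diagFreq_neg ω β ε (hω k k.2) (hβ k k.2), neg_neg,
      mul_left_comm, ← intervalIntegral_cexp_neg_add_cexp, mul_add]

end OscillatingField

theorem stmt_7_general (d : ℕ)
    (Φ : (Fin d → ℤ) → ℂ) (ω β : (Fin d → ℤ) → ℝ)
    (hΦ : ∀ k : Fin d → ℤ, k ≠ 0 → Φ (-k) = (starRingEnd ℂ) (Φ k))
    (hω : ∀ k : Fin d → ℤ, k ≠ 0 → ω (-k) = -ω k)
    (hβ : ∀ k : Fin d → ℤ, k ≠ 0 → β (-k) = β k)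
    (hsum : Summable fun k : {k : Fin d → ℤ // k ≠ 0} =>
      (∑ i, ((k.1 i : ℝ)) ^ 2) * ‖Φ k.1‖)
    (E : ℝ → ℝ → (Fin d → ℝ) → Fin d → ℂ)
    (hE : ∀ (ε s : ℝ) (x : Fin d → ℝ) (j : Fin d),
      E ε s x j = ∑' k : {k : Fin d → ℤ // k ≠ 0},
        (-Complex.I * (k.1 j : ℂ)) * Φ k.1
          * Complex.exp (-(Complex.I * (ω k.1 : ℂ) * ((ε ^ (-(β k.1)) : ℝ) : ℂ) * (s : ℂ)))
          * Complex.exp (Complex.I * ∑ i, (k.1 i : ℂ) * (x i : ℂ))) :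
    ∀ t : ℝ, 0 < t → ∀ ε : ℝ, 0 < ε → ∀ v : Fin d → ℝ, ∀ i j : Fin d,
    ∀ F : {k : Fin d → ℤ // k ≠ 0} → ℂ,
      (∀ k : {k : Fin d → ℤ // k ≠ 0},
        F k = (((k.1 i : ℝ) * (k.1 j : ℝ) * ‖Φ k.1‖ ^ 2 *
          (if (ε ^ ((2 : ℝ) - β k.1) : ℝ) * ω k.1 - (∑ m, (k.1 m : ℝ) * v m) = 0
           then t / ε ^ 2
           else Real.sin
              (((ε ^ ((2 : ℝ) - β k.1) : ℝ) * ω k.1 - ∑ m, (k.1 m : ℝ) * v m) * (t / ε ^ 2))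
            / ((ε ^ ((2 : ℝ) - β k.1) : ℝ) * ω k.1 - ∑ m, (k.1 m : ℝ) * v m)) : ℝ) : ℂ)) →
      Summable (fun k : {k : Fin d → ℤ // k ≠ 0} => ‖F k‖) ∧
      (((2 * Real.pi) ^ d)⁻¹ : ℝ) •
        (∫ x in torusBox d,
          ∫ σ in (0 : ℝ)..(t / ε ^ 2), E ε t (x + σ • v) i * E ε (t - ε ^ 2 * σ) x j)
        = ∑' k : {k : Fin d → ℤ // k ≠ 0}, F k := by
  intro t _ ε hε v i j F hF
  have hT : 0 ≤ t / ε ^ 2 := by positivity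
  have hF_cos : ∀ k, F k = (OscillatingField.amp Φ i j k.1 : ℂ)
      * ↑(∫ σ in (0 : ℝ)..t / ε ^ 2, Real.cos (OscillatingField.diagFreq ω β ε v k.1 * σ)) :=
    fun k => by
      rw [hF, OscillatingField.amp, OscillatingField.diagFreq, intervalIntegral_cos_mul,
        Complex.ofReal_mul]
  refine ⟨((OscillatingField.summable_abs_amp hsum i j).mul_right (t / ε ^ 2)).of_nonneg_of_le
    (fun _ => norm_nonneg _) fun k => ?_, ?_⟩
  · rw [hF_cos, norm_mul, Complex.norm_real, Complex.norm_real, Real.norm_eq_abs, Real.norm_eq_abs]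
    exact mul_le_mul_of_nonneg_left (abs_intervalIntegral_cos_mul_le _ hT) (abs_nonneg _)
  have hE_field : ∀ ε s x j, E ε s x j = OscillatingField.field Φ ω β ε s x j := hE
  have h2π : (((2 * Real.pi) ^ d : ℝ) : ℂ) ≠ 0 := by
    exact_mod_cast (by positivity : (2 * Real.pi) ^ d ≠ 0)
  simp_rw [hE_field,
    OscillatingField.integral_torusBox_field_mul_field ω β ε hΦ hω hβ hsum hε t v i j hT,
    OscillatingField.tsum_amp_mul_intervalIntegral_cexp ω β ε hΦ hω hβ hsum v i j hT, ← hF_cos,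
    Complex.real_smul, Complex.ofReal_inv, inv_mul_cancel_left₀ h2π]

/-- for the oscillating electric field
`E^ε(t,x) = Σ_{k≠0} (−ik) Φ_k e^{−i ω_k ε^{−β_k} t} e^{i k·x}` (with `Φ_{−k} = Φ_k^*`,
`ω_{−k} = −ω_k`, `β_{−k} = β_k ≥ 0` and `Σ_{k≠0} |k|² |Φ_k| < ∞`), the diffusion tensor
`𝔻^ε(t,v) = ⨍ dx ∫_0^{t/ε²} dσ E^ε(t, x + σv) ⊗ E^ε(t − ε²σ, x)` has entries
`Σ_{k≠0} k_i k_j |Φ_k|² sin((ε^{2−β_k} ω_k − k·v) t/ε²)/(ε^{2−β_k} ω_k − k·v)`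
(the ratio `sin(aT)/a` interpreted as `T` when `a = 0`), the series converging absolutely.
The `𝕋^d`-average `⨍ dx` is taken over the fundamental domain `[0,2π)^d`. -/
theorem stmt_7 (d : ℕ) (hd : 1 ≤ d)
    (Φ : (Fin d → ℤ) → ℂ) (ω β : (Fin d → ℤ) → ℝ)
    (hΦ : ∀ k : Fin d → ℤ, k ≠ 0 → Φ (-k) = (starRingEnd ℂ) (Φ k))
    (hω : ∀ k : Fin d → ℤ, k ≠ 0 → ω (-k) = -ω k)
    (hβpos : ∀ k : Fin d → ℤ, k ≠ 0 → 0 ≤ β k)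
    (hβ : ∀ k : Fin d → ℤ, k ≠ 0 → β (-k) = β k)
    (hsum : Summable fun k : {k : Fin d → ℤ // k ≠ 0} =>
      (∑ i, ((k.1 i : ℝ)) ^ 2) * ‖Φ k.1‖)
    (E : ℝ → ℝ → (Fin d → ℝ) → Fin d → ℂ)
    (hE : ∀ (ε s : ℝ) (x : Fin d → ℝ) (j : Fin d),
      E ε s x j = ∑' k : {k : Fin d → ℤ // k ≠ 0},
        (-Complex.I * (k.1 j : ℂ)) * Φ k.1
          * Complex.exp (-(Complex.I * (ω k.1 : ℂ) * ((ε ^ (-(β k.1)) : ℝ) : ℂ) * (s : ℂ)))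
          * Complex.exp (Complex.I * ∑ i, (k.1 i : ℂ) * (x i : ℂ))) :
    ∀ t : ℝ, 0 < t → ∀ ε : ℝ, 0 < ε → ∀ v : Fin d → ℝ, ∀ i j : Fin d,
    ∀ F : {k : Fin d → ℤ // k ≠ 0} → ℂ,
      (∀ k : {k : Fin d → ℤ // k ≠ 0},
        F k = (((k.1 i : ℝ) * (k.1 j : ℝ) * ‖Φ k.1‖ ^ 2 *
          (if (ε ^ ((2 : ℝ) - β k.1) : ℝ) * ω k.1 - (∑ m, (k.1 m : ℝ) * v m) = 0
           then t / ε ^ 2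
           else Real.sin
              (((ε ^ ((2 : ℝ) - β k.1) : ℝ) * ω k.1 - ∑ m, (k.1 m : ℝ) * v m) * (t / ε ^ 2))
            / ((ε ^ ((2 : ℝ) - β k.1) : ℝ) * ω k.1 - ∑ m, (k.1 m : ℝ) * v m)) : ℝ) : ℂ)) →
      Summable (fun k : {k : Fin d → ℤ // k ≠ 0} => ‖F k‖) ∧
      (((2 * Real.pi) ^ d)⁻¹ : ℝ) •
        (∫ x in torusBox d,
          ∫ σ in (0 : ℝ)..(t / ε ^ 2), E ε t (x + σ • v) i * E ε (t - ε ^ 2 * σ) x j)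
        = ∑' k : {k : Fin d → ℤ // k ≠ 0}, F k :=
  stmt_7_general d Φ ω β hΦ hω hβ hsum E hE
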